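/- Let s : [0,1] → ℝ be continuous with s(τ) > 0 for all τ, let g₁,…,g_p : [0,1] → ℝ and h₁,…,h_q : [0,1] → ℝ be continuous, and suppose y : [0,1] → ℝ satisfies, for every τ ∈ [0,1], y'(τ) = s(τ) · ( Σᵢ max(0, gᵢ(τ))² + Σⱼ hⱼ(τ)² ). If y(0) = y(1), then for every τ ∈ [0,1]: gᵢ(τ) ≤ 0 for all i = 1,…,p and hⱼ(τ) = 0 for all j = 1,…,q. -/
import Mathlib


open Set

theorem stmt_2 (p q : ℕ) (s : ℝ → ℝ)
    (hs_cont : ContinuousOn s (Icc 0 1))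
    (hs_pos : ∀ τ ∈ Icc (0:ℝ) 1, 0 < s τ)
    (g : Fin p → ℝ → ℝ) (h : Fin q → ℝ → ℝ)
    (hg_cont : ∀ i, ContinuousOn (g i) (Icc 0 1))
    (hh_cont : ∀ j, ContinuousOn (h j) (Icc 0 1))
    (y : ℝ → ℝ)
    (hy : ∀ τ ∈ Icc (0:ℝ) 1,
      HasDerivAt y (s τ * ((∑ i, max 0 (g i τ) ^ 2) + ∑ j, (h j τ) ^ 2)) τ)
    (hbc : y 0 = y 1) :
    ∀ τ ∈ Icc (0:ℝ) 1, (∀ i, g i τ ≤ 0) ∧ (∀ j, h j τ = 0) := by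
  set G : ℝ → ℝ := fun τ => (∑ i, max 0 (g i τ) ^ 2) + ∑ j, (h j τ) ^ 2 with hGdef
  have hGnn : ∀ τ, 0 ≤ G τ := by
    intro τ
    apply add_nonneg <;> apply Finset.sum_nonneg <;> intro i _ <;> positivity
  have hGcont : ContinuousOn G (Icc 0 1) := by
    apply ContinuousOn.add
    · refine continuousOn_finset_sum _ fun i _ => ContinuousOn.pow ?_ 2
      exact fun x hx => (continuousWithinAt_const (b := (0:ℝ))).max (hg_cont i x hx)
    · exact continuousOn_finset_sum _ fun j _ => (hh_cont j).pow 2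
  have hycont : ContinuousOn y (Icc 0 1) := fun τ hτ =>
    (hy τ hτ).continuousAt.continuousWithinAt
  have hmono : MonotoneOn y (Icc 0 1) := by
    apply monotoneOn_of_deriv_nonneg (convex_Icc 0 1) hycont
    · intro τ hτ
      rw [interior_Icc] at hτ
      exact (hy τ (Ioo_subset_Icc_self hτ)).differentiableAt.differentiableWithinAt
    · intro τ hτ
      rw [interior_Icc] at hτ
      rw [(hy τ (Ioo_subset_Icc_self hτ)).deriv]
      exact mul_nonneg (hs_pos τ (Ioo_subset_Icc_self hτ)).le (hGnn τ)
  have hconst : ∀ τ ∈ Icc (0:ℝ) 1, y τ = y 0 := by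
    intro τ hτ
    have h1 := hmono (left_mem_Icc.mpr zero_le_one) hτ hτ.1
    have h2 := hmono hτ (right_mem_Icc.mpr zero_le_one) hτ.2
    linarith
  have hGzeroIoo : ∀ τ ∈ Ioo (0:ℝ) 1, G τ = 0 := by
    intro τ hτ
    have hd : HasDerivAt y 0 τ := by
      have hev : ∀ᶠ x in nhds τ, y x = y 0 := by
        filter_upwards [Icc_mem_nhds hτ.1 hτ.2] with x hx using hconst x hx
      exact (hasDerivAt_const τ (y 0)).congr_of_eventuallyEq hev
    have hu : s τ * G τ = 0 := (hy τ (Ioo_subset_Icc_self hτ)).unique hd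
    rcases mul_eq_zero.mp hu with h' | h'
    · exact absurd h' (hs_pos τ (Ioo_subset_Icc_self hτ)).ne'
    · exact h'
  have hGzero : ∀ τ ∈ Icc (0:ℝ) 1, G τ = 0 := by
    intro τ hτ
    have hτcl : τ ∈ closure (Ioo (0:ℝ) 1) := by
      rw [closure_Ioo one_ne_zero.symm]; exact hτ
    have hne : (nhdsWithin τ (Ioo (0:ℝ) 1)).NeBot :=
      mem_closure_iff_nhdsWithin_neBot.mp hτcl
    have ht1 : Filter.Tendsto G (nhdsWithin τ (Ioo 0 1)) (nhds (G τ)) :=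
      (hGcont τ hτ).mono Ioo_subset_Icc_self
    have ht2 : Filter.Tendsto G (nhdsWithin τ (Ioo 0 1)) (nhds 0) := by
      apply Filter.Tendsto.congr' _ tendsto_const_nhds
      filter_upwards [self_mem_nhdsWithin] with x hx using (hGzeroIoo x hx).symm
    exact tendsto_nhds_unique ht1 ht2
  intro τ hτ
  have hG := hGzero τ hτ
  have hA : (0:ℝ) ≤ ∑ i, max 0 (g i τ) ^ 2 := Finset.sum_nonneg fun i _ => by positivity
  have hB : (0:ℝ) ≤ ∑ j, (h j τ) ^ 2 := Finset.sum_nonneg fun j _ => by positivity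
  have hG' : (∑ i, max 0 (g i τ) ^ 2) + ∑ j, (h j τ) ^ 2 = 0 := hG
  have hs1 : (∑ i, max 0 (g i τ) ^ 2) = 0 ∧ (∑ j, (h j τ) ^ 2) = 0 := by
    constructor <;> linarith
  constructor
  · intro i
    have := (Finset.sum_eq_zero_iff_of_nonneg (fun i _ => by positivity)).mp hs1.1 i
      (Finset.mem_univ i)
    have hm : max 0 (g i τ) = 0 := by
      have := pow_eq_zero_iff (n := 2) (by norm_num) |>.mp this
      exact this
    exact max_eq_left_iff.mp hm
  · intro j
    have := (Finset.sum_eq_zero_iff_of_nonneg (fun j _ => by positivity)).mp hs1.2 j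
      (Finset.mem_univ j)
    exact pow_eq_zero_iff (n := 2) (by norm_num) |>.mp this
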